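/- For every T > 0 and every τ ∈ [0, T], one has ξ_T(τ) ≤ (g₁g₂/(a₂a₃)) · 1/(1 − e^{−a₁T}). (This is the ultimate upper bound of Lemma 1 specialized to the 1-cycle with unit dose and period T, whose output at phase τ equals ξ_T(τ).) -/

import Mathlib

/-!
Put `x(s) = e^{sA} (I - e^{TA})⁻¹ B`. Then `x' = A x` and `x(0) = x(T) + B`: along one period the
state decays and is then reset by the unit dose. Each component obeys a scalar inequality
`f' ≤ C - a f` with `f(0) ≤ f(T) + D`, and Grönwall's inequality together with this jump condition
gives `f ≤ C / a + D / (1 - e^{-aT})` on `[0, T]`. Going down the cascade, this bounds the first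
component by `M = 1 / (1 - e^{-a₁T})`, the second by `g₁ M / a₂` and the third by
`g₁ g₂ M / (a₂ a₃)`.
-/

open Matrix

/-- The system matrix of the third-order PK model. -/
noncomputable def Amat (a₁ a₂ a₃ g₁ g₂ : ℝ) : Matrix (Fin 3) (Fin 3) ℝ :=
  !![-a₁, 0, 0; g₁, -a₂, 0; 0, g₂, -a₃]

/-- The input vector `B = (1,0,0)ᵀ`. -/
noncomputable def Bvec : Fin 3 → ℝ := ![1, 0, 0]

/-- The output map `C x = x₃`. -/
noncomputable def Cout (x : Fin 3 → ℝ) : ℝ := x 2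

/-- `ξ_T(τ) = C e^{τA} (I − e^{TA})⁻¹ B`, the output at phase `τ` of the 1-cycle
with unit dose and inter-dose interval `T`. -/
noncomputable def xi (a₁ a₂ a₃ g₁ g₂ : ℝ) (T τ : ℝ) : ℝ :=
  Cout ((NormedSpace.exp (τ • Amat a₁ a₂ a₃ g₁ g₂) *
    (1 - NormedSpace.exp (T • Amat a₁ a₂ a₃ g₁ g₂))⁻¹).mulVec Bvec)

open Set

lemma one_sub_exp_neg_mul_pos {a T : ℝ} (ha : 0 < a) (hT : 0 < T) :
    0 < 1 - Real.exp (-a * T) := by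
  rw [sub_pos, Real.exp_lt_one_iff]
  nlinarith

lemma le_of_hasDerivAt_le_sub_mul_of_le_add {f f' : ℝ → ℝ} {a C D T : ℝ}
    (ha : 0 < a) (hT : 0 < T) (hD : 0 ≤ D)
    (hf : ∀ s ∈ Icc 0 T, HasDerivAt f (f' s) s) (hf' : ∀ s ∈ Icc 0 T, f' s ≤ C - a * f s)
    (hjump : f 0 ≤ f T + D) :
    ∀ s ∈ Icc 0 T, f s ≤ C / a + D / (1 - Real.exp (-a * T)) := by
  have hgron : ∀ s ∈ Icc 0 T, f s ≤ C / a + (f 0 - C / a) * Real.exp (-a * s) := by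
    intro s hs
    have h := le_gronwallBound_of_liminf_deriv_right_le (f' := f') (δ := f 0) (K := -a) (ε := C)
      (fun x hx => (hf x hx).continuousAt.continuousWithinAt)
      (fun x hx r hr => (hf x (Ico_subset_Icc_self hx)).hasDerivWithinAt.liminf_right_slope_le hr)
      le_rfl (fun x hx => by linarith [hf' x (Ico_subset_Icc_self hx)]) s hs
    rw [gronwallBound_of_K_ne_0 (neg_ne_zero.2 ha.ne'), sub_zero] at h
    convert h using 1
    field_simp
    ring
  have hq := one_sub_exp_neg_mul_pos ha hT
  have hf0 : f 0 - C / a ≤ D / (1 - Real.exp (-a * T)) := by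
    rw [le_div_iff₀ hq]
    linarith [hgron T ⟨hT.le, le_rfl⟩]
  intro s hs
  have hexp : Real.exp (-a * s) ≤ 1 := Real.exp_le_one_iff.2 (by nlinarith [hs.1])
  have hdecay : (f 0 - C / a) * Real.exp (-a * s) ≤ D / (1 - Real.exp (-a * T)) := by
    rcases le_or_gt (f 0 - C / a) 0 with hneg | hpos
    · exact (mul_nonpos_of_nonpos_of_nonneg hneg (Real.exp_pos _).le).trans (by positivity)
    · exact (mul_le_of_le_one_right hpos.le hexp).trans hf0
  linarith [hgron s hs]

lemma hasDerivAt_exp_smul_mulVec {n : Type*} [Fintype n] [DecidableEq n]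
    (A : Matrix n n ℝ) (y : n → ℝ) (s : ℝ) :
    HasDerivAt (fun t : ℝ => NormedSpace.exp (t • A) *ᵥ y)
      (A *ᵥ (NormedSpace.exp (s • A) *ᵥ y)) s := by
  -- Matrices carry no global normed algebra structure; any one gives the same derivative.
  let := Matrix.linftyOpNormedRing (n := n) (α := ℝ)
  let := Matrix.linftyOpNormedAlgebra (n := n) (R := ℝ) (α := ℝ)
  let L : Matrix n n ℝ →ₗ[ℝ] n → ℝ :=
    { toFun := fun N => N *ᵥ y
      map_add' := fun M N => Matrix.add_mulVec M N y
      map_smul' := fun c M => Matrix.smul_mulVec c M y }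
  rw [Matrix.mulVec_mulVec]
  exact (LinearMap.toContinuousLinearMap L).hasFDerivAt.comp_hasDerivAt s
    (hasDerivAt_exp_smul_const' A s)

lemma Amat_mulVec (a₁ a₂ a₃ g₁ g₂ : ℝ) (v : Fin 3 → ℝ) :
    Amat a₁ a₂ a₃ g₁ g₂ *ᵥ v = ![-a₁ * v 0, g₁ * v 0 - a₂ * v 1, g₂ * v 1 - a₃ * v 2] := by
  ext i
  fin_cases i <;> simp [Amat, Matrix.mulVec, dotProduct, Fin.sum_univ_three] <;> ring

/-- Upper bound for the unit-dose 1-cycle output: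
`ξ_T(τ) ≤ (g₁g₂/(a₂a₃)) · 1/(1 − e^{−a₁T})` for all `τ ∈ [0, T]`. -/
theorem xi_upper_bound
    (a₁ a₂ a₃ g₁ g₂ : ℝ)
    (ha₁ : 0 < a₁) (ha₂ : 0 < a₂) (ha₃ : 0 < a₃) (hg₁ : 0 < g₁) (hg₂ : 0 < g₂)
    (T : ℝ) (hT : 0 < T) (τ : ℝ) (hτ : τ ∈ Set.Icc (0 : ℝ) T) :
    xi a₁ a₂ a₃ g₁ g₂ T τ ≤ g₁ * g₂ / (a₂ * a₃) * (1 / (1 - Real.exp (-a₁ * T))) := by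
  set A := Amat a₁ a₂ a₃ g₁ g₂
  have hA (v : Fin 3 → ℝ) : A *ᵥ v = ![-a₁ * v 0, g₁ * v 0 - a₂ * v 1, g₂ * v 1 - a₃ * v 2] :=
    Amat_mulVec a₁ a₂ a₃ g₁ g₂ v
  set E := NormedSpace.exp (T • A)
  by_cases hE : IsUnit (1 - E).det
  swap
  · rw [xi, Matrix.nonsing_inv_apply_not_isUnit _ hE, Matrix.mul_zero, Matrix.zero_mulVec]
    have := one_sub_exp_neg_mul_pos ha₁ hT
    exact mul_nonneg (by positivity) (by positivity)
  set M := 1 / (1 - Real.exp (-a₁ * T))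
  set y := (1 - E)⁻¹ *ᵥ Bvec
  set x : ℝ → Fin 3 → ℝ := fun s => NormedSpace.exp (s • A) *ᵥ y
  have hx' (i : Fin 3) (s : ℝ) : HasDerivAt (fun t => x t i) ((A *ᵥ x s) i) s :=
    hasDerivAt_pi.1 (hasDerivAt_exp_smul_mulVec A y s) i
  have hjump : x 0 = x T + Bvec := by
    have : (1 - E) *ᵥ y = Bvec := by
      rw [Matrix.mulVec_mulVec, Matrix.mul_nonsing_inv _ hE, Matrix.one_mulVec]
    simp only [x, zero_smul, NormedSpace.exp_zero, Matrix.one_mulVec, ← this, Matrix.sub_mulVec]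
    abel
  have hx₀ : ∀ s ∈ Icc 0 T, x s 0 ≤ M := by
    simpa [M] using le_of_hasDerivAt_le_sub_mul_of_le_add (C := 0) ha₁ hT zero_le_one
      (fun s _ => hx' 0 s) (fun s _ => by simp [hA]) (by simp [hjump, Bvec])
  have hx₁ : ∀ s ∈ Icc 0 T, x s 1 ≤ g₁ * M / a₂ := by
    simpa using le_of_hasDerivAt_le_sub_mul_of_le_add ha₂ hT le_rfl (fun s _ => hx' 1 s)
      (fun s hs => by
        rw [hA]; simp only [Matrix.cons_val_one, Matrix.cons_val_zero]; gcongr; exact hx₀ s hs)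
      (by simp [hjump, Bvec])
  have hx₂ : ∀ s ∈ Icc 0 T, x s 2 ≤ g₂ * (g₁ * M / a₂) / a₃ := by
    simpa using le_of_hasDerivAt_le_sub_mul_of_le_add ha₃ hT le_rfl (fun s _ => hx' 2 s)
      (fun s hs => by rw [hA]; simp only [Matrix.cons_val]; gcongr; exact hx₁ s hs)
      (by simp [hjump, Bvec])
  calc xi a₁ a₂ a₃ g₁ g₂ T τ = x τ 2 := by rw [xi, Cout, ← Matrix.mulVec_mulVec]
    _ ≤ g₂ * (g₁ * M / a₂) / a₃ := hx₂ τ hτ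
    _ = _ := by ring
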